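/- arXiv:2601.16812 — 4 statements merged into one kernel-verified Lean document; each statement's English description precedes it below -/
import Mathlib

section
/- Let C ⊆ ℝⁿ be a convex set. Let f : ℝⁿ → ℝ be L_f-smooth and let g_i : ℝⁿ → ℝ, i = 1,…,m, be L_{g_i}-smooth. For τ > 0 define the quadratic penalty function P_τ(x) = f(x) + (τ/2)·Σ_{i=1}^m max(0, g_i(x))². Suppose that for each i, ‖∇g_i(x)‖ ≤ M_{i1} and max(0, g_i(x)) ≤ M_{i2} for all x ∈ C. Then ∇P_τ is Lipschitz continuous on C with constant L_{τ,C} = L_f + τ·Σ_{i=1}^m (M_{i1}² + M_{i2}·L_{g_i}); that is, ‖∇P_τ(x) − ∇P_τ(y)‖ ≤ L_{τ,C}·‖x − y‖ for all x, y ∈ C. -/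
/-!
Since `t ↦ max 0 t ^ 2` is differentiable with derivative `2 * max 0 t`, the gradient of the
penalty is `∇f + τ • ∑ i, max 0 (g i) • ∇(g i)`. Each summand is Lipschitz on `C` by the product
rule for Lipschitz bounds: `max 0 (g i)` is bounded by `M₂ i` and, by the mean value inequality
on the convex set `C`, is `M₁ i`-Lipschitz there, while `∇(g i)` is bounded by `M₁ i` and
`Lg i`-Lipschitz.
-/

open InnerProductSpace Topology

theorem hasDerivAt_max_zero_sq (t : ℝ) :
    HasDerivAt (fun s : ℝ => max 0 s ^ 2) (2 * max 0 t) t := by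
  rcases lt_trichotomy t 0 with ht | rfl | ht
  · have hzero : (fun s : ℝ => max 0 s ^ 2) =ᶠ[𝓝 t] fun _ => 0 := by
      filter_upwards [gt_mem_nhds ht] with s hs
      simp [max_eq_left hs.le]
    simpa [max_eq_left ht.le] using (hasDerivAt_const t (0 : ℝ)).congr_of_eventuallyEq hzero
  · have hbound : (fun s : ℝ => max 0 s ^ 2) =O[𝓝 0] fun s => s ^ 2 :=
      Asymptotics.isBigO_of_le _ fun s => by
        simpa [abs_pow, sq_abs] using
          pow_le_pow_left₀ (abs_nonneg _) (abs_le_abs_of_nonneg (le_max_left 0 s)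
            (max_le (abs_nonneg s) (le_abs_self s))) 2
    have hsq : (fun s : ℝ => s ^ 2) =o[𝓝 0] fun s => s := by
      simpa using (hasDerivAt_pow 2 (0 : ℝ)).isLittleO
    rw [hasDerivAt_iff_isLittleO]
    simpa using hbound.trans_isLittleO hsq
  · have hsq : (fun s : ℝ => max 0 s ^ 2) =ᶠ[𝓝 t] fun s => s ^ 2 := by
      filter_upwards [lt_mem_nhds ht] with s hs
      simp [max_eq_right hs.le]
    simpa [max_eq_right ht.le, mul_comm] using (hasDerivAt_pow 2 t).congr_of_eventuallyEq hsq

theorem norm_smul_sub_smul_le {F : Type*} [SeminormedAddCommGroup F] [NormedSpace ℝ F]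
    (a b : ℝ) (u v : F) : ‖a • u - b • v‖ ≤ |a - b| * ‖u‖ + |b| * ‖u - v‖ := by
  calc ‖a • u - b • v‖ = ‖(a - b) • u + b • (u - v)‖ := by
        congr 1; module
    _ ≤ |a - b| * ‖u‖ + |b| * ‖u - v‖ := by
        simpa only [norm_smul, Real.norm_eq_abs] using norm_add_le ((a - b) • u) (b • (u - v))

variable {E : Type*} [NormedAddCommGroup E] [InnerProductSpace ℝ E] [CompleteSpace E]

theorem norm_fderiv_eq_norm_gradient (φ : E → ℝ) (x : E) : ‖fderiv ℝ φ x‖ = ‖gradient φ x‖ := by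
  rw [← toDual_gradient, LinearIsometryEquiv.norm_map]

noncomputable def quadraticPenalty {ι : Type*} [Fintype ι] (f : E → ℝ) (g : ι → E → ℝ) (τ : ℝ)
    (x : E) : ℝ :=
  f x + (τ / 2) * ∑ i, max 0 (g i x) ^ 2

theorem hasGradientAt_quadraticPenalty {ι : Type*} [Fintype ι] {f : E → ℝ} {g : ι → E → ℝ}
    (τ : ℝ) {x : E} (hf : DifferentiableAt ℝ f x) (hg : ∀ i, DifferentiableAt ℝ (g i) x) :
    HasGradientAt (quadraticPenalty f g τ)
      (gradient f x + τ • ∑ i, max 0 (g i x) • gradient (g i) x) x := by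
  have hsq : ∀ i, HasFDerivAt (fun z => max 0 (g i z) ^ 2)
      ((2 * max 0 (g i x)) • fderiv ℝ (g i) x) x := fun i =>
    (hasDerivAt_max_zero_sq (g i x)).comp_hasFDerivAt x (hg i).hasFDerivAt
  rw [hasGradientAt_iff_hasFDerivAt]
  refine (hf.hasFDerivAt.fun_add
    ((HasFDerivAt.fun_sum (u := Finset.univ) fun i _ => hsq i).const_mul (τ / 2))).congr_fderiv ?_
  simp only [map_add, map_smul, map_sum, toDual_gradient, Finset.smul_sum, smul_smul]
  congr! 3
  ring

theorem norm_max_zero_smul_gradient_sub_le {C : Set E} (hC : Convex ℝ C) {g : E → ℝ}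
    (hg : Differentiable ℝ g) {L M₁ M₂ : ℝ}
    (hLip : ∀ x y, ‖gradient g x - gradient g y‖ ≤ L * ‖x - y‖)
    (hM₁ : ∀ x ∈ C, ‖gradient g x‖ ≤ M₁) (hM₂ : ∀ x ∈ C, max 0 (g x) ≤ M₂)
    {x y : E} (hx : x ∈ C) (hy : y ∈ C) :
    ‖max 0 (g x) • gradient g x - max 0 (g y) • gradient g y‖ ≤ (M₁ ^ 2 + M₂ * L) * ‖x - y‖ := by
  have hg_lip : |g x - g y| ≤ M₁ * ‖x - y‖ := by
    simpa only [Real.norm_eq_abs] using hC.norm_image_sub_le_of_norm_fderiv_le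
      (fun z _ => hg z) (fun z hz => (norm_fderiv_eq_norm_gradient g z).trans_le (hM₁ z hz)) hy hx
  have hM₁_nonneg : 0 ≤ M₁ := (norm_nonneg _).trans (hM₁ x hx)
  have hy_nonneg : 0 ≤ max 0 (g y) := le_max_left _ _
  have hM₂_nonneg : 0 ≤ M₂ := hy_nonneg.trans (hM₂ y hy)
  calc ‖max 0 (g x) • gradient g x - max 0 (g y) • gradient g y‖
      ≤ |max 0 (g x) - max 0 (g y)| * ‖gradient g x‖
        + |max 0 (g y)| * ‖gradient g x - gradient g y‖ := norm_smul_sub_smul_le _ _ _ _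
    _ ≤ (M₁ * ‖x - y‖) * M₁ + M₂ * (L * ‖x - y‖) := by
      rw [abs_of_nonneg hy_nonneg]
      gcongr
      · rw [max_comm 0 (g x), max_comm 0 (g y)]
        exact (abs_max_sub_max_le_abs (g x) (g y) 0).trans hg_lip
      · exact hM₁ x hx
      · exact hM₂ y hy
      · exact hLip x y
    _ = (M₁ ^ 2 + M₂ * L) * ‖x - y‖ := by ring

theorem stmt3 {n m : ℕ} (C : Set (EuclideanSpace ℝ (Fin n))) (hC : Convex ℝ C)
    (f : EuclideanSpace ℝ (Fin n) → ℝ) (g : Fin m → EuclideanSpace ℝ (Fin n) → ℝ)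
    (Lf : ℝ) (hf : ContDiff ℝ 1 f)
    (hfLip : ∀ x y, ‖gradient f x - gradient f y‖ ≤ Lf * ‖x - y‖)
    (Lg : Fin m → ℝ) (hg : ∀ i, ContDiff ℝ 1 (g i))
    (hgLip : ∀ i, ∀ x y, ‖gradient (g i) x - gradient (g i) y‖ ≤ Lg i * ‖x - y‖)
    (τ : ℝ) (hτ : 0 < τ)
    (M₁ M₂ : Fin m → ℝ)
    (hM₁ : ∀ i, ∀ x ∈ C, ‖gradient (g i) x‖ ≤ M₁ i)
    (hM₂ : ∀ i, ∀ x ∈ C, max 0 (g i x) ≤ M₂ i) :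
    ∀ x ∈ C, ∀ y ∈ C,
      ‖gradient (fun z => f z + (τ / 2) * ∑ i, max 0 (g i z) ^ 2) x -
          gradient (fun z => f z + (τ / 2) * ∑ i, max 0 (g i z) ^ 2) y‖ ≤
        (Lf + τ * ∑ i, (M₁ i ^ 2 + M₂ i * Lg i)) * ‖x - y‖ := by
  intro x hx y hy
  have hf' : Differentiable ℝ f := hf.differentiable one_ne_zero
  have hg' : ∀ i, Differentiable ℝ (g i) := fun i => (hg i).differentiable one_ne_zero
  have hP : ∀ z, gradient (quadraticPenalty f g τ) z =
      gradient f z + τ • ∑ i, max 0 (g i z) • gradient (g i) z := fun z =>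
    (hasGradientAt_quadraticPenalty τ (hf' z) fun i => hg' i z).gradient
  have hsum : ‖∑ i, max 0 (g i x) • gradient (g i) x - ∑ i, max 0 (g i y) • gradient (g i) y‖
      ≤ (∑ i, (M₁ i ^ 2 + M₂ i * Lg i)) * ‖x - y‖ := by
    rw [← Finset.sum_sub_distrib, Finset.sum_mul]
    exact (norm_sum_le _ _).trans <| Finset.sum_le_sum fun i _ =>
      norm_max_zero_smul_gradient_sub_le hC (hg' i) (hgLip i) (hM₁ i) (hM₂ i) hx hy
  change ‖gradient (quadraticPenalty f g τ) x - gradient (quadraticPenalty f g τ) y‖ ≤ _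
  calc ‖gradient (quadraticPenalty f g τ) x - gradient (quadraticPenalty f g τ) y‖
      = ‖(gradient f x - gradient f y) + τ • (∑ i, max 0 (g i x) • gradient (g i) x
          - ∑ i, max 0 (g i y) • gradient (g i) y)‖ := by
        rw [hP, hP]; congr 1; module
    _ ≤ Lf * ‖x - y‖ + τ * ((∑ i, (M₁ i ^ 2 + M₂ i * Lg i)) * ‖x - y‖) := by
        grw [norm_add_le, norm_smul, Real.norm_of_nonneg hτ.le, hfLip, hsum]
    _ = (Lf + τ * ∑ i, (M₁ i ^ 2 + M₂ i * Lg i)) * ‖x - y‖ := by ring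
end

section
/- Let φ_j : ℝⁿ → ℝ, j = 1,…,N, be differentiable functions and set φ(x) = (1/N)·Σ_{j=1}^N φ_j(x). Assume φ is L-smooth and that the Strong Growth Condition holds with constant ρ > 0, i.e., (1/N)·Σ_{j=1}^N ‖∇φ_j(x)‖² ≤ ρ·‖∇φ(x)‖² for all x ∈ ℝⁿ. Let η = 1/(ρ·L). Then for every x ∈ ℝⁿ, the expected value of the objective after one stochastic gradient step with uniformly sampled index satisfies (1/N)·Σ_{j=1}^N φ(x − η·∇φ_j(x)) ≤ φ(x) − ‖∇φ(x)‖²/(2·ρ·L). -/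
/-!
Each step obeys the descent lemma `Φ (x + v) ≤ Φ x + ⟪∇Φ x, v⟫ + L / 2 * ‖v‖ ^ 2`, proved by
noting that `t ↦ Φ (x + t • v) - t ⟪∇Φ x, v⟫ - L t² ‖v‖² / 2` has nonpositive derivative on
`[0, ∞)`. For `v = -η ∇φ_j x`, averaging over `j` turns the linear terms into `-η ‖∇Φ x‖²`,
because `∇Φ x` is the mean of the `∇φ_j x`, and the strong growth condition bounds the quadratic
terms by `L η² ρ ‖∇Φ x‖² / 2`. With `η = 1 / (ρ L)` the sum is `-‖∇Φ x‖² / (2 ρ L)`.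
-/

open RealInnerProductSpace

section Descent

variable {E : Type*} [NormedAddCommGroup E] [InnerProductSpace ℝ E] [CompleteSpace E]

theorem image_add_le_of_lipschitz_gradient {Φ : E → ℝ} {L : ℝ}
    (hΦ : Differentiable ℝ Φ) (hLip : ∀ x y, ‖gradient Φ x - gradient Φ y‖ ≤ L * ‖x - y‖)
    (x v : E) :
    Φ (x + v) ≤ Φ x + ⟪gradient Φ x, v⟫ + L / 2 * ‖v‖ ^ 2 := by
  set h : ℝ → ℝ := fun t => Φ (x + t • v) - t * ⟪gradient Φ x, v⟫ - L / 2 * t ^ 2 * ‖v‖ ^ 2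
  have hderiv : ∀ t, HasDerivAt h
      (⟪gradient Φ (x + t • v) - gradient Φ x, v⟫ - L * t * ‖v‖ ^ 2) t := by
    intro t
    have hline : HasDerivAt (fun t : ℝ => x + t • v) v t := by
      simpa using ((hasDerivAt_id t).smul_const v).const_add x
    have hΦline : HasDerivAt (fun t : ℝ => Φ (x + t • v)) ⟪gradient Φ (x + t • v), v⟫ t := by
      have := (hΦ (x + t • v)).hasFDerivAt.comp_hasDerivAt t hline
      rwa [(hΦ _).hasGradientAt.fderiv_apply] at this
    refine ((hΦline.sub ((hasDerivAt_id' t).mul_const ⟪gradient Φ x, v⟫)).sub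
      (((hasDerivAt_pow 2 t).const_mul (L / 2)).mul_const (‖v‖ ^ 2))).congr_deriv ?_
    rw [inner_sub_left]
    ring
  have hderiv_nonpos : ∀ t, 0 ≤ t →
      ⟪gradient Φ (x + t • v) - gradient Φ x, v⟫ - L * t * ‖v‖ ^ 2 ≤ 0 := by
    intro t ht
    have := calc ⟪gradient Φ (x + t • v) - gradient Φ x, v⟫
        ≤ ‖gradient Φ (x + t • v) - gradient Φ x‖ * ‖v‖ := real_inner_le_norm _ _
      _ ≤ L * ‖(x + t • v) - x‖ * ‖v‖ := by gcongr; exact hLip _ _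
      _ = L * t * ‖v‖ ^ 2 := by
        rw [add_sub_cancel_left, norm_smul, Real.norm_of_nonneg ht]; ring
    linarith
  have hanti : AntitoneOn h (Set.Ici 0) :=
    antitoneOn_of_hasDerivWithinAt_nonpos (convex_Ici 0)
      (fun t _ => (hderiv t).continuousAt.continuousWithinAt)
      (fun t _ => (hderiv t).hasDerivWithinAt)
      (fun t ht => hderiv_nonpos t (le_of_lt (by simpa using ht)))
  have h_one_le_zero := hanti Set.self_mem_Ici (Set.mem_Ici.2 zero_le_one) zero_le_one
  simp only [h, one_smul, zero_smul, add_zero, one_mul, zero_mul, one_pow, ne_eq,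
    OfNat.ofNat_ne_zero, not_false_eq_true, zero_pow, mul_zero, sub_zero] at h_one_le_zero
  linarith

theorem gradient_const_mul_sum {ι : Type*} (s : Finset ι) {φ : ι → E → ℝ} {x : E}
    (hφ : ∀ j ∈ s, DifferentiableAt ℝ (φ j) x) (c : ℝ) :
    gradient (fun y => c * ∑ j ∈ s, φ j y) x = c • ∑ j ∈ s, gradient (φ j) x := by
  refine HasGradientAt.gradient ?_
  rw [hasGradientAt_iff_hasFDerivAt, map_smul, map_sum]
  exact (HasFDerivAt.fun_sum fun j hj => (hφ j hj).hasGradientAt.hasFDerivAt).const_mul c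

theorem average_image_sub_smul_le {ι : Type*} [Fintype ι] [Nonempty ι] {Φ : E → ℝ} {L : ℝ}
    (hΦ : Differentiable ℝ Φ) (hLip : ∀ x y, ‖gradient Φ x - gradient Φ y‖ ≤ L * ‖x - y‖)
    (x : E) (g : ι → E) (hmean : gradient Φ x = (1 / Fintype.card ι : ℝ) • ∑ j, g j) (η : ℝ) :
    (1 / Fintype.card ι : ℝ) * ∑ j, Φ (x - η • g j) ≤
      Φ x - η * ‖gradient Φ x‖ ^ 2 +
        L / 2 * η ^ 2 * ((1 / Fintype.card ι : ℝ) * ∑ j, ‖g j‖ ^ 2) := by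
  have hstep : ∀ j, Φ (x - η • g j) ≤
      Φ x - η * ⟪gradient Φ x, g j⟫ + L / 2 * η ^ 2 * ‖g j‖ ^ 2 := by
    intro j
    have := image_add_le_of_lipschitz_gradient hΦ hLip x (-(η • g j))
    rw [← sub_eq_add_neg, inner_neg_right, real_inner_smul_right, norm_neg, norm_smul,
      Real.norm_eq_abs, mul_pow, sq_abs] at this
    linarith
  have hinner : (1 / Fintype.card ι : ℝ) * ∑ j, ⟪gradient Φ x, g j⟫ = ‖gradient Φ x‖ ^ 2 := by
    rw [← inner_sum, ← real_inner_smul_right, ← hmean, real_inner_self_eq_norm_sq]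
  calc (1 / Fintype.card ι : ℝ) * ∑ j, Φ (x - η • g j)
      ≤ (1 / Fintype.card ι : ℝ) *
          ∑ j, (Φ x - η * ⟪gradient Φ x, g j⟫ + L / 2 * η ^ 2 * ‖g j‖ ^ 2) := by
        gcongr with j
        exact hstep j
    _ = Φ x - η * ((1 / Fintype.card ι : ℝ) * ∑ j, ⟪gradient Φ x, g j⟫) +
          L / 2 * η ^ 2 * ((1 / Fintype.card ι : ℝ) * ∑ j, ‖g j‖ ^ 2) := by
        simp only [Finset.sum_add_distrib, Finset.sum_sub_distrib, Finset.sum_const,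
          Finset.card_univ, nsmul_eq_mul, ← Finset.mul_sum]
        field_simp
    _ = Φ x - η * ‖gradient Φ x‖ ^ 2 +
          L / 2 * η ^ 2 * ((1 / Fintype.card ι : ℝ) * ∑ j, ‖g j‖ ^ 2) := by
        rw [hinner]

end Descent

theorem stmt4_general {n N : ℕ} (φ : Fin N → EuclideanSpace ℝ (Fin n) → ℝ)
    (hφj : ∀ j, Differentiable ℝ (φ j))
    (Φ : EuclideanSpace ℝ (Fin n) → ℝ)
    (hΦ : Φ = fun x => (1 / N : ℝ) * ∑ j, φ j x)
    (L : ℝ) (hL : 0 < L)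
    (hΦLip : ∀ x y, ‖gradient Φ x - gradient Φ y‖ ≤ L * ‖x - y‖)
    (ρ : ℝ) (hρ : 0 < ρ)
    (hSGC : ∀ x, (1 / N : ℝ) * ∑ j, ‖gradient (φ j) x‖ ^ 2 ≤ ρ * ‖gradient Φ x‖ ^ 2)
    (η : ℝ) (hη : η = 1 / (ρ * L)) :
    ∀ x, (1 / N : ℝ) * ∑ j, Φ (x - η • gradient (φ j) x) ≤
      Φ x - ‖gradient Φ x‖ ^ 2 / (2 * ρ * L) := by
  intro x
  rcases N.eq_zero_or_pos with rfl | hN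
  · -- `1 / 0 = 0` makes both sides vanish.
    simp [hΦ]
  have : Nonempty (Fin N) := ⟨⟨0, hN⟩⟩
  have hΦdiff : Differentiable ℝ Φ := hΦ ▸ by fun_prop
  have hmean : gradient Φ x = (1 / N : ℝ) • ∑ j, gradient (φ j) x :=
    hΦ ▸ gradient_const_mul_sum _ (fun j _ => (hφj j).differentiableAt) _
  have hexpected := average_image_sub_smul_le hΦdiff hΦLip x (fun j => gradient (φ j) x)
    (by rwa [Fintype.card_fin]) η
  rw [Fintype.card_fin] at hexpected
  calc (1 / N : ℝ) * ∑ j, Φ (x - η • gradient (φ j) x)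
      ≤ Φ x - η * ‖gradient Φ x‖ ^ 2 +
          L / 2 * η ^ 2 * ((1 / N : ℝ) * ∑ j, ‖gradient (φ j) x‖ ^ 2) := hexpected
    _ ≤ Φ x - η * ‖gradient Φ x‖ ^ 2 + L / 2 * η ^ 2 * (ρ * ‖gradient Φ x‖ ^ 2) := by
        gcongr _ + _ * ?_
        exact hSGC x
    _ = Φ x - ‖gradient Φ x‖ ^ 2 / (2 * ρ * L) := by
        rw [hη]
        field_simp
        ring

theorem stmt4 {n N : ℕ} (φ : Fin N → EuclideanSpace ℝ (Fin n) → ℝ)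
    (hφj : ∀ j, Differentiable ℝ (φ j))
    (Φ : EuclideanSpace ℝ (Fin n) → ℝ)
    (hΦ : Φ = fun x => (1 / N : ℝ) * ∑ j, φ j x)
    (L : ℝ) (hL : 0 < L) (hΦsmooth : ContDiff ℝ 1 Φ)
    (hΦLip : ∀ x y, ‖gradient Φ x - gradient Φ y‖ ≤ L * ‖x - y‖)
    (ρ : ℝ) (hρ : 0 < ρ)
    (hSGC : ∀ x, (1 / N : ℝ) * ∑ j, ‖gradient (φ j) x‖ ^ 2 ≤ ρ * ‖gradient Φ x‖ ^ 2)
    (η : ℝ) (hη : η = 1 / (ρ * L)) :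
    ∀ x, (1 / N : ℝ) * ∑ j, Φ (x - η • gradient (φ j) x) ≤
      Φ x - ‖gradient Φ x‖ ^ 2 / (2 * ρ * L) :=
  stmt4_general φ hφj Φ hΦ L hL hΦLip ρ hρ hSGC η hη
end

section
/- Let g_i : ℝⁿ → ℝ, i = 1,…,m, be differentiable, let x̄ ∈ ℝⁿ, and let I₊(x̄) = { i : g_i(x̄) ≥ 0 }. Suppose the vectors ∇g_i(x̄), i ∈ I₊(x̄), are linearly independent (E-LICQ), and suppose Σ_{i=1}^m max(0, g_i(x̄))·∇g_i(x̄) = 0. Then g_i(x̄) ≤ 0 for all i = 1,…,m, i.e., x̄ is feasible for the constraints g_i(x) ≤ 0. -/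
theorem stmt9 {n m : ℕ} (g : Fin m → EuclideanSpace ℝ (Fin n) → ℝ)
    (hg : ∀ i, Differentiable ℝ (g i)) (xbar : EuclideanSpace ℝ (Fin n))
    (hELICQ : LinearIndependent ℝ
      (fun i : {i : Fin m // 0 ≤ g i xbar} => gradient (g i.1) xbar))
    (hsum : ∑ i, max 0 (g i xbar) • gradient (g i) xbar = 0) :
    ∀ i, g i xbar ≤ 0 := by
  intro i
  by_contra h
  push_neg at h
  have hi : 0 ≤ g i xbar := le_of_lt h
  have hsub : ∑ j : {i : Fin m // 0 ≤ g i xbar},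
      (max 0 (g j.1 xbar)) • gradient (g j.1) xbar = 0 := by
    rw [← hsum]
    rw [← Finset.sum_filter_of_ne (p := fun j => 0 ≤ g j xbar)
      (f := fun j => (max 0 (g j xbar)) • gradient (g j) xbar)
      (by
        intro j _ hne
        by_contra hle
        exact hne (by simp [max_eq_left (le_of_not_ge hle)]))]
    exact (Finset.sum_subtype (Finset.univ.filter (fun x => 0 ≤ g x xbar))
      (fun x => by simp) (fun x => (max 0 (g x xbar)) • gradient (g x) xbar)).symm
  have := Fintype.linearIndependent_iff.mp hELICQ
    (fun j => max 0 (g j.1 xbar)) hsub ⟨i, hi⟩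
  simp only [max_eq_right hi] at this
  linarith
end

section
/- Let f : ℝⁿ → ℝ and g_i : ℝⁿ → ℝ, i = 1,…,m, be continuously differentiable. Let (x^k) ⊆ ℝⁿ converge to x̄ and (τ_k) be positive reals with τ_k → ∞, and suppose ‖∇f(x^k) + τ_k·Σ_{i=1}^m max(0, g_i(x^k))·∇g_i(x^k)‖ → 0. Assume x̄ is feasible (g_i(x̄) ≤ 0 for all i) and the LICQ holds at x̄, i.e., the gradients ∇g_i(x̄) for i with g_i(x̄) = 0 are linearly independent. Define λ^k ∈ ℝᵐ by λ^k_i = τ_k·max(0, g_i(x^k)). Then the sequence (λ^k) is bounded. -/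
/-!
Multipliers of strictly inactive constraints vanish eventually, because `g i (x k) → g i xbar < 0`.
The remaining ones are the coefficients of the penalty term `∑ i, λₖᵢ • ∇gᵢ(xₖ)`, which converges
to `-∇f(xbar)`. Linear independence of the active gradients at `xbar` bounds the coefficients of a
combination by a multiple of its norm, and this bound survives the small perturbation from
`∇gᵢ(xbar)` to `∇gᵢ(xₖ)`.
-/

open Filter Topology

theorem ContDiff.continuous_gradient {E : Type*} [NormedAddCommGroup E] [InnerProductSpace ℝ E]
    [CompleteSpace E] {f : E → ℝ} (hf : ContDiff ℝ 1 f) : Continuous (gradient f) :=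
  (InnerProductSpace.toDual ℝ E).symm.continuous.comp (hf.continuous_fderiv one_ne_zero)

section LinearCombination

variable {ι E : Type*} [Fintype ι] [NormedAddCommGroup E] [NormedSpace ℝ E]

theorem LinearIndependent.exists_norm_le_mul_norm_sum {v : ι → E} (hv : LinearIndependent ℝ v) :
    ∃ c > 0, ∀ a : ι → ℝ, ‖a‖ ≤ c * ‖∑ j, a j • v j‖ := by
  obtain ⟨c, hc, hanti⟩ := (Fintype.linearCombination ℝ v).exists_antilipschitzWith
    (LinearMap.ker_eq_bot_of_injective hv.fintypeLinearCombination_injective)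
  refine ⟨c, hc, fun a => ?_⟩
  simpa [dist_eq_norm, Fintype.linearCombination_apply] using hanti.le_mul_dist a 0

theorem norm_sum_smul_sub_sum_smul_le (a : ι → ℝ) (v w : ι → E) :
    ‖∑ j, a j • w j - ∑ j, a j • v j‖ ≤ ‖a‖ * ∑ j, ‖w j - v j‖ := by
  rw [← Finset.sum_sub_distrib, Finset.mul_sum]
  refine (norm_sum_le _ _).trans (Finset.sum_le_sum fun j _ => ?_)
  rw [← smul_sub, norm_smul]
  exact mul_le_mul_of_nonneg_right (norm_le_pi_norm a j) (norm_nonneg _)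

theorem LinearIndependent.exists_eventually_norm_le_mul_norm_sum {α : Type*} {l : Filter α}
    {v : ι → E} (hv : LinearIndependent ℝ v) {w : α → ι → E} (hw : Tendsto w l (𝓝 v)) :
    ∃ C, ∀ᶠ k in l, ∀ a : ι → ℝ, ‖a‖ ≤ C * ‖∑ j, a j • w k j‖ := by
  obtain ⟨c, hc, hcv⟩ := hv.exists_norm_le_mul_norm_sum
  have hdist : Tendsto (fun k => ∑ j, ‖w k j - v j‖) l (𝓝 0) := by
    have hcont : Continuous fun u : ι → E => ∑ j, ‖u j - v j‖ := by fun_prop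
    simpa [Function.comp_def] using (hcont.tendsto v).comp hw
  refine ⟨2 * c, (hdist.eventually_le_const (by positivity : (0 : ℝ) < (2 * c)⁻¹)).mono
    fun k hk a => ?_⟩
  have hclose : ‖∑ j, a j • v j‖ ≤ ‖∑ j, a j • w k j‖ + ‖a‖ * (2 * c)⁻¹ :=
    calc ‖∑ j, a j • v j‖
        ≤ ‖∑ j, a j • w k j‖ + ‖∑ j, a j • w k j - ∑ j, a j • v j‖ :=
          norm_le_norm_add_norm_sub _ _
      _ ≤ ‖∑ j, a j • w k j‖ + ‖a‖ * (2 * c)⁻¹ := by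
          grw [norm_sum_smul_sub_sum_smul_le, hk]
  have hhalf : ‖a‖ ≤ c * ‖∑ j, a j • w k j‖ + ‖a‖ / 2 :=
    calc ‖a‖ ≤ c * ‖∑ j, a j • v j‖ := hcv a
      _ ≤ c * (‖∑ j, a j • w k j‖ + ‖a‖ * (2 * c)⁻¹) := by gcongr
      _ = c * ‖∑ j, a j • w k j‖ + ‖a‖ / 2 := by field_simp
  linarith

theorem exists_eventually_norm_le_mul_norm_sum_of_support {α : Type*} {l : Filter α}
    {p : ι → Prop} {v : ι → E} (hv : LinearIndependent ℝ fun i : Subtype p => v i)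
    {w : α → ι → E} (hw : Tendsto w l (𝓝 v)) {a : α → ι → ℝ}
    (ha : ∀ᶠ k in l, ∀ i, ¬ p i → a k i = 0) :
    ∃ C, ∀ᶠ k in l, ‖a k‖ ≤ C * ‖∑ i, a k i • w k i‖ := by
  classical
  have hwp : Tendsto (fun k (i : Subtype p) => w k i) l (𝓝 fun i => v i) :=
    tendsto_pi_nhds.2 fun i => (continuous_apply i.1).continuousAt.tendsto.comp hw
  obtain ⟨C, hC⟩ := hv.exists_eventually_norm_le_mul_norm_sum hwp
  refine ⟨C, (hC.and ha).mono fun k ⟨hCk, hak⟩ => ?_⟩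
  have hsum : ∑ i, a k i • w k i = ∑ i : Subtype p, a k i • w k i := by
    rw [← Fintype.sum_subtype_add_sum_subtype p, add_eq_left]
    exact Finset.sum_eq_zero fun i _ => by rw [hak i i.2, zero_smul]
  have hC0 : 0 ≤ C * ‖∑ i, a k i • w k i‖ := (norm_nonneg _).trans (hsum ▸ hCk _)
  refine (pi_norm_le_iff_of_nonneg hC0).2 fun i => ?_
  by_cases hi : p i
  · exact (norm_le_pi_norm (fun i : Subtype p => a k i) ⟨i, hi⟩).trans (hsum ▸ hCk _)
  · rwa [hak i hi, norm_zero]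

end LinearCombination

theorem stmt11_general {n m : ℕ} (f : EuclideanSpace ℝ (Fin n) → ℝ)
    (g : Fin m → EuclideanSpace ℝ (Fin n) → ℝ)
    (hf : ContDiff ℝ 1 f) (hg : ∀ i, ContDiff ℝ 1 (g i))
    (x : ℕ → EuclideanSpace ℝ (Fin n)) (xbar : EuclideanSpace ℝ (Fin n))
    (hx : Tendsto x atTop (nhds xbar))
    (τ : ℕ → ℝ)
    (hgrad : Tendsto
      (fun k => ‖gradient f (x k) + τ k • ∑ i, max 0 (g i (x k)) • gradient (g i) (x k)‖)
      atTop (nhds 0))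
    (hfeas : ∀ i, g i xbar ≤ 0)
    (hLICQ : LinearIndependent ℝ
      (fun i : {i : Fin m // g i xbar = 0} => gradient (g i.1) xbar))
    (lam : ℕ → Fin m → ℝ) (hlam : ∀ k i, lam k i = τ k * max 0 (g i (x k))) :
    ∃ M : ℝ, ∀ k i, |lam k i| ≤ M := by
  have hgradf : Tendsto (fun k => gradient f (x k)) atTop (𝓝 (gradient f xbar)) :=
    (hf.continuous_gradient.tendsto xbar).comp hx
  have hpenalty : Tendsto (fun k => ∑ i, lam k i • gradient (g i) (x k)) atTop
      (𝓝 (0 - gradient f xbar)) := by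
    refine ((tendsto_zero_iff_norm_tendsto_zero.2 hgrad).sub hgradf).congr fun k => ?_
    simp only [hlam, Finset.smul_sum, smul_smul, add_sub_cancel_left]
  have hinactive : ∀ᶠ k in atTop, ∀ i, g i xbar ≠ 0 → lam k i = 0 := by
    refine eventually_all.2 fun i => ?_
    rcases (hfeas i).lt_or_eq with hlt | heq
    · filter_upwards [((hg i).continuous.tendsto xbar).comp hx |>.eventually_lt_const hlt]
        with k hk _
      rw [hlam, max_eq_left (show g i (x k) ≤ 0 from hk.le), mul_zero]
    · exact Eventually.of_forall fun k hne => absurd heq hne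
  have hgradg : Tendsto (fun k i => gradient (g i) (x k)) atTop (𝓝 fun i => gradient (g i) xbar) :=
    tendsto_pi_nhds.2 fun i => ((hg i).continuous_gradient.tendsto xbar).comp hx
  obtain ⟨C, hC⟩ := exists_eventually_norm_le_mul_norm_sum_of_support
    (p := fun i => g i xbar = 0) (v := fun i => gradient (g i) xbar) hLICQ hgradg hinactive
  have hbdd : IsBoundedUnder (· ≤ ·) atTop fun k => ‖lam k‖ :=
    (hpenalty.norm.const_mul C).isBoundedUnder_le.mono_le hC
  obtain ⟨M, hM⟩ := hbdd.bddAbove_range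
  exact ⟨M, fun k i => (norm_le_pi_norm (lam k) i).trans (hM ⟨k, rfl⟩)⟩

theorem stmt11 {n m : ℕ} (f : EuclideanSpace ℝ (Fin n) → ℝ)
    (g : Fin m → EuclideanSpace ℝ (Fin n) → ℝ)
    (hf : ContDiff ℝ 1 f) (hg : ∀ i, ContDiff ℝ 1 (g i))
    (x : ℕ → EuclideanSpace ℝ (Fin n)) (xbar : EuclideanSpace ℝ (Fin n))
    (hx : Tendsto x atTop (nhds xbar))
    (τ : ℕ → ℝ) (hτpos : ∀ k, 0 < τ k) (hτ : Tendsto τ atTop atTop)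
    (hgrad : Tendsto
      (fun k => ‖gradient f (x k) + τ k • ∑ i, max 0 (g i (x k)) • gradient (g i) (x k)‖)
      atTop (nhds 0))
    (hfeas : ∀ i, g i xbar ≤ 0)
    (hLICQ : LinearIndependent ℝ
      (fun i : {i : Fin m // g i xbar = 0} => gradient (g i.1) xbar))
    (lam : ℕ → Fin m → ℝ) (hlam : ∀ k i, lam k i = τ k * max 0 (g i (x k))) :
    ∃ M : ℝ, ∀ k i, |lam k i| ≤ M :=
  stmt11_general f g hf hg x xbar hx τ hgrad hfeas hLICQ lam hlam
end
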